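/- arXiv:0909.3910 — 3 statements merged into one kernel-verified Lean document; each statement's English description precedes it below -/
import Mathlib

section
/- For any simple graph G and any edge e of G, the energy of G is at most the energy of the graph obtained from G by deleting e, plus 2; that is, E(G) ≤ E(G − e) + 2. -/
/-!
Let `S = sign(A)` be the sign matrix of `A = adj(G)`, obtained by applying `sign` to the
eigenvalues of `A`. Then `tr(S A) = E(G)`, and since `|xᵀ S x| ≤ xᵀ x`, also `tr(S B) ≤ E(B)`
for every symmetric `B` (expand `B` in an orthonormal eigenbasis). With `B = adj(G - e)` and
`A = B + E_uv + E_vu`, this gives `E(G) = tr(S B) + S_uv + S_vu ≤ E(G - e) + 2`, where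
`S_uv + S_vu ≤ 2` is the quadratic-form bound at `e_u ± e_v`.
-/

theorem SimpleGraph.adjMatrix_isHermitian {V : Type*} [Fintype V] (G : SimpleGraph V)
    [DecidableRel G.Adj] : (G.adjMatrix ℝ).IsHermitian := by
  rw [Matrix.IsHermitian, Matrix.conjTranspose_eq_transpose_of_trivial]
  exact SimpleGraph.isSymm_adjMatrix G

noncomputable def SimpleGraph.adjEigenvalues {V : Type*} [Fintype V] [DecidableEq V]
    (G : SimpleGraph V) : V → ℝ :=
  letI := Classical.decRel G.Adj
  (G.adjMatrix_isHermitian).eigenvalues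

noncomputable def SimpleGraph.energy {V : Type*} [Fintype V] [DecidableEq V]
    (G : SimpleGraph V) : ℝ :=
  ∑ v, |G.adjEigenvalues v|

namespace Matrix

variable {n : Type*} [Fintype n] [DecidableEq n]

theorem abs_dotProduct_diagonal_mulVec_le {d : n → ℝ} (hd : ∀ k, |d k| ≤ 1) (y : n → ℝ) :
    |y ⬝ᵥ diagonal d *ᵥ y| ≤ y ⬝ᵥ y := by
  simp only [mulVec_diagonal, dotProduct]
  refine (Finset.abs_sum_le_sum_abs _ _).trans (Finset.sum_le_sum fun k _ => ?_)
  rw [show y k * (d k * y k) = d k * (y k * y k) by ring, abs_mul, abs_mul_self]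
  exact mul_le_of_le_one_left (mul_self_nonneg _) (hd k)

theorem abs_dotProduct_conj_diagonal_mulVec_le {U : Matrix n n ℝ} (hU : U ∈ unitaryGroup n ℝ)
    {d : n → ℝ} (hd : ∀ k, |d k| ≤ 1) (x : n → ℝ) :
    |x ⬝ᵥ (U * diagonal d * star U) *ᵥ x| ≤ x ⬝ᵥ x := by
  have hstar : star U = Uᵀ := by
    rw [star_eq_conjTranspose, conjTranspose_eq_transpose_of_trivial]
  have hnorm : x ᵥ* U ⬝ᵥ x ᵥ* U = x ⬝ᵥ x := by
    conv_lhs => arg 2; rw [← mulVec_transpose, ← hstar]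
    rw [dotProduct_mulVec, vecMul_vecMul, Unitary.mul_star_self_of_mem hU, vecMul_one]
  rw [hstar, ← mulVec_mulVec, ← mulVec_mulVec, mulVec_transpose, dotProduct_mulVec, ← hnorm]
  exact abs_dotProduct_diagonal_mulVec_le hd _

theorem add_apply_swap_le_two_of_abs_dotProduct_mulVec_le {S : Matrix n n ℝ}
    (hS : ∀ x, |x ⬝ᵥ S *ᵥ x| ≤ x ⬝ᵥ x) {u v : n} (huv : u ≠ v) : S u v + S v u ≤ 2 := by
  set p : n → ℝ := Pi.single u 1 + Pi.single v 1
  set m : n → ℝ := Pi.single u 1 - Pi.single v 1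
  have hdiff : p ⬝ᵥ S *ᵥ p - m ⬝ᵥ S *ᵥ m = 2 * (S u v + S v u) := by
    simp only [p, m, mulVec_add, mulVec_sub, mulVec_single_one, dotProduct_add, add_dotProduct,
      dotProduct_sub, sub_dotProduct, single_one_dotProduct, col_apply]
    ring
  have hp : p ⬝ᵥ p = 2 := by simp [p, huv, huv.symm, one_add_one_eq_two]
  have hm : m ⬝ᵥ m = 2 := by simp [m, huv, huv.symm, one_add_one_eq_two]
  linarith [(abs_le.mp (hS p)).2, (abs_le.mp (hS m)).1]

namespace IsHermitian

variable {A B : Matrix n n ℝ}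

theorem dotProduct_eigenvectorBasis_self (hA : A.IsHermitian) (j : n) :
    ⇑(hA.eigenvectorBasis j) ⬝ᵥ ⇑(hA.eigenvectorBasis j) = 1 := by
  have hunit := hA.eigenvectorBasis.orthonormal.1 j
  rw [EuclideanSpace.norm_eq] at hunit
  simpa [dotProduct, sq] using hunit

theorem cfc_mulVec_eigenvectorBasis (hA : A.IsHermitian) (f : ℝ → ℝ) (j : n) :
    hA.cfc f *ᵥ ⇑(hA.eigenvectorBasis j) = f (hA.eigenvalues j) • ⇑(hA.eigenvectorBasis j) := by
  rw [IsHermitian.cfc, Unitary.conjStarAlgAut_apply, ← mulVec_mulVec,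
    hA.star_eigenvectorUnitary_mulVec, ← mulVec_mulVec, diagonal_mulVec_single,
    ← hA.eigenvectorUnitary_mulVec]
  simp

theorem abs_dotProduct_cfc_mulVec_le (hA : A.IsHermitian) {f : ℝ → ℝ}
    (hf : ∀ i, |f (hA.eigenvalues i)| ≤ 1) (x : n → ℝ) : |x ⬝ᵥ hA.cfc f *ᵥ x| ≤ x ⬝ᵥ x :=
  abs_dotProduct_conj_diagonal_mulVec_le hA.eigenvectorUnitary.prop hf x

theorem trace_eq_sum_dotProduct_eigenvectorBasis (hB : B.IsHermitian) (X : Matrix n n ℝ) :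
    trace X = ∑ j, ⇑(hB.eigenvectorBasis j) ⬝ᵥ X *ᵥ ⇑(hB.eigenvectorBasis j) := by
  set W : Matrix n n ℝ := ↑hB.eigenvectorUnitary with hW
  have hconj : trace X = trace (star W * X * W) := by
    rw [trace_mul_cycle, Unitary.mul_star_self_of_mem hB.eigenvectorUnitary.prop, Matrix.one_mul]
  rw [hconj, trace]
  refine Finset.sum_congr rfl fun j _ => ?_
  simp only [diag_apply, mul_apply, dotProduct, mulVec, hW, star_apply, Finset.mul_sum,
    Finset.sum_mul, IsHermitian.eigenvectorUnitary_apply, star_trivial]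
  rw [Finset.sum_comm]
  ring_nf

theorem trace_mul_eq_sum_eigenvalues_mul (hB : B.IsHermitian) (S : Matrix n n ℝ) :
    trace (S * B) = ∑ j, hB.eigenvalues j *
      (⇑(hB.eigenvectorBasis j) ⬝ᵥ S *ᵥ ⇑(hB.eigenvectorBasis j)) := by
  rw [hB.trace_eq_sum_dotProduct_eigenvectorBasis]
  refine Finset.sum_congr rfl fun j _ => ?_
  rw [← mulVec_mulVec, hB.mulVec_eigenvectorBasis, mulVec_smul, dotProduct_smul, smul_eq_mul]

theorem trace_mul_le_sum_abs_eigenvalues (hB : B.IsHermitian) {S : Matrix n n ℝ}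
    (hS : ∀ x, |x ⬝ᵥ S *ᵥ x| ≤ x ⬝ᵥ x) : trace (S * B) ≤ ∑ j, |hB.eigenvalues j| := by
  rw [hB.trace_mul_eq_sum_eigenvalues_mul]
  refine Finset.sum_le_sum fun j _ => ?_
  have hw := hS (hB.eigenvectorBasis j)
  rw [hB.dotProduct_eigenvectorBasis_self] at hw
  calc _ ≤ |hB.eigenvalues j| * |⇑(hB.eigenvectorBasis j) ⬝ᵥ S *ᵥ ⇑(hB.eigenvectorBasis j)| :=
        (le_abs_self _).trans (abs_mul _ _).le
    _ ≤ |hB.eigenvalues j| := mul_le_of_le_one_right (abs_nonneg _) hw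

theorem trace_cfc_mul_self (hA : A.IsHermitian) (f : ℝ → ℝ) :
    trace (hA.cfc f * A) = ∑ i, hA.eigenvalues i * f (hA.eigenvalues i) := by
  rw [hA.trace_mul_eq_sum_eigenvalues_mul]
  refine Finset.sum_congr rfl fun i _ => ?_
  rw [hA.cfc_mulVec_eigenvectorBasis, dotProduct_smul, hA.dotProduct_eigenvectorBasis_self,
    smul_eq_mul, mul_one]

theorem sum_abs_eigenvalues_le_of_eq_add_single (hA : A.IsHermitian) (hB : B.IsHermitian)
    {u v : n} (huv : u ≠ v) (hAB : A = B + (single u v 1 + single v u 1)) :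
    ∑ i, |hA.eigenvalues i| ≤ ∑ i, |hB.eigenvalues i| + 2 := by
  set S := hA.cfc fun t => (SignType.sign t : ℝ)
  have hS : ∀ x, |x ⬝ᵥ S *ᵥ x| ≤ x ⬝ᵥ x := hA.abs_dotProduct_cfc_mulVec_le fun i => by
    rcases lt_trichotomy (hA.eigenvalues i) 0 with h | h | h <;> simp [h]
  calc ∑ i, |hA.eigenvalues i| = trace (S * A) := by simp [S, hA.trace_cfc_mul_self]
    _ = trace (S * B) + (S v u + S u v) := by
        simp [hAB, Matrix.mul_add, trace_add, trace_mul_single]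
    _ ≤ ∑ i, |hB.eigenvalues i| + 2 := by
        linarith [hB.trace_mul_le_sum_abs_eigenvalues hS,
          add_apply_swap_le_two_of_abs_dotProduct_mulVec_le hS huv]

end IsHermitian

end Matrix

namespace SimpleGraph

theorem energy_eq_sum_abs_eigenvalues {V : Type*} [Fintype V] [DecidableEq V] (G : SimpleGraph V) [DecidableRel G.Adj] :
    G.energy = ∑ v, |G.adjMatrix_isHermitian.eigenvalues v| := by
  unfold energy adjEigenvalues
  congr!

theorem adjMatrix_eq_adjMatrix_deleteEdges_add_single {V R : Type*} [DecidableEq V]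
    [NonAssocSemiring R] (G : SimpleGraph V) [DecidableRel G.Adj] {u v : V} (huv : G.Adj u v)
    [DecidableRel (G.deleteEdges {s(u, v)}).Adj] :
    G.adjMatrix R = (G.deleteEdges {s(u, v)}).adjMatrix R +
      (Matrix.single u v 1 + Matrix.single v u 1) := by
  ext i j
  by_cases hij : s(i, j) = s(u, v)
  · rcases Sym2.eq_iff.mp hij with ⟨rfl, rfl⟩ | ⟨rfl, rfl⟩ <;>
      simp [huv, huv.symm, huv.ne, huv.ne.symm]
  · have hne : ¬ (u = i ∧ v = j) ∧ ¬ (v = i ∧ u = j) := by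
      constructor <;> rintro ⟨rfl, rfl⟩ <;> simp at hij
    simp [adjMatrix_apply, Matrix.single, hij, hne]

end SimpleGraph

/-- Deleting an edge decreases the energy by at most 2:
`E(G) ≤ E(G - e) + 2`. -/
theorem energy_le_energy_deleteEdge_add_two {V : Type*} [Fintype V] [DecidableEq V]
    (G : SimpleGraph V) (e : Sym2 V) (he : e ∈ G.edgeSet) :
    G.energy ≤ (G.deleteEdges {e}).energy + 2 := by
  induction e using Sym2.ind with
  | _ u v =>
  classical
  have huv : G.Adj u v := he
  rw [G.energy_eq_sum_abs_eigenvalues, (G.deleteEdges {s(u, v)}).energy_eq_sum_abs_eigenvalues]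
  exact Matrix.IsHermitian.sum_abs_eigenvalues_le_of_eq_add_single _ _ huv.ne
    (G.adjMatrix_eq_adjMatrix_deleteEdges_add_single huv)
end

section
/- Let p ≥ 11 be a prime with p ≡ 1 (mod 4). The energy of the Paley graph G_p equals (p−1)(1+√p)/2; in particular E(G_p) > p^{3/2}/2. -/
/-- The Paley graph of order `p` (for a prime `p ≡ 1 (mod 4)`): the vertices are
the elements of `GF(p) = ZMod p`, and two distinct vertices are adjacent iff their
difference is a (nonzero) square in `GF(p)`. -/
def paleyGraph (p : ℕ) [Fact p.Prime] (hp : p % 4 = 1) : SimpleGraph (ZMod p) where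
  Adj x y := x ≠ y ∧ IsSquare (x - y)
  symm := ⟨by
    rintro x y ⟨hne, hsq⟩
    refine ⟨hne.symm, ?_⟩
    have h1 : IsSquare (-1 : ZMod p) := ZMod.exists_sq_eq_neg_one_iff.2 (by omega)
    simpa [neg_one_mul, neg_sub] using h1.mul hsq⟩
  loopless := ⟨fun x h => h.1 rfl⟩

instance paleyGraph.instDecidableRelAdj (p : ℕ) [Fact p.Prime] {hp : p % 4 = 1} :
    DecidableRel (paleyGraph p hp).Adj := fun x y =>
      show Decidable (x ≠ y ∧ IsSquare (x - y)) from instDecidableAnd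

open Finset Matrix Polynomial

section Counting

variable {V : Type*} [Fintype V]

theorem Fintype.sum_comp_eq_sum_card_filter_mul {t : Finset ℝ} {β : V → ℝ} (hβ : ∀ v, β v ∈ t)
    (g : ℝ → ℝ) : ∑ v, g (β v) = ∑ x ∈ t, (#{v | β v = x} : ℝ) * g x := by
  rw [← sum_fiberwise_of_maps_to' (fun v _ => hβ v)]
  simp only [sum_const, nsmul_eq_mul]

/-- Irrationality of `s` forces the values `s` and `-s` to be taken equally often, which pins
down all three multiplicities. -/
theorem sum_abs_sub_one_eq_of_irrational [Nonempty V] {β : V → ℝ} {s : ℝ} (hs : Irrational s)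
    (hs1 : 1 ≤ s) (hβ : ∀ v, β v = Fintype.card V ∨ β v = s ∨ β v = -s)
    (hsum : ∑ v, β v = Fintype.card V) :
    ∑ v, |β v - 1| = (Fintype.card V - 1) * (1 + s) := by
  set n : ℕ := Fintype.card V
  have hn : (1 : ℝ) ≤ n := by exact_mod_cast Fintype.card_pos
  have hsum_comp := Fintype.sum_comp_eq_sum_card_filter_mul (t := {(n : ℝ), s, -s})
    (by simpa using hβ)
  have hdistinct : (n : ℝ) ∉ ({s, -s} : Finset ℝ) ∧ s ∉ ({-s} : Finset ℝ) := by
    simp only [mem_insert, mem_singleton, not_or]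
    exact ⟨⟨(hs.ne_nat n).symm, (hs.neg.ne_nat n).symm⟩, by linarith⟩
  simp only [sum_insert hdistinct.1, sum_insert hdistinct.2, sum_singleton] at hsum_comp
  set a : ℕ := #{v | β v = n}
  set b : ℕ := #{v | β v = s}
  set c : ℕ := #{v | β v = -s}
  have hcard : (a + b + c : ℝ) = n := by
    have := hsum_comp fun _ => 1
    simp only [sum_const, card_univ, nsmul_eq_mul, mul_one] at this
    linarith
  have hlin : a * n + (b - c) * s = n := by
    have := hsum_comp id
    simp only [id] at this
    linarith
  have hbc : b = c := by
    by_contra hbc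
    refine (hs.intCast_mul (sub_ne_zero.2 (Int.natCast_inj.not.2 hbc))).ne_int ((1 - a) * n) ?_
    push_cast
    linarith
  have ha : (a : ℝ) = 1 := by
    rw [hbc, sub_self, zero_mul, add_zero] at hlin
    exact (mul_eq_right₀ (by positivity)).1 hlin
  rw [hsum_comp fun x => |x - 1|, abs_of_nonneg (by linarith), abs_of_nonneg (by linarith),
    abs_of_nonpos (by linarith)]
  rw [hbc] at hcard ⊢
  linear_combination (n - 1 - s) * ha + s * hcard

end Counting

theorem Matrix.IsHermitian.eval_eigenvalues_eq_zero {n 𝕜 : Type*} [Fintype n] [DecidableEq n]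
    [Nonempty n] [RCLike 𝕜] {A : Matrix n n 𝕜} (hA : A.IsHermitian) {q : ℝ[X]}
    (hq : aeval A q = 0) (i : n) : q.eval (hA.eigenvalues i) = 0 := by
  have := spectrum.subset_polynomial_aeval A q ⟨_, hA.eigenvalues_mem_spectrum_real i, rfl⟩
  rwa [hq, spectrum.zero_eq, Set.mem_singleton_iff] at this

local notation "𝐉" => Matrix.of fun _ _ => (1 : ℝ)

theorem allOnes_mul_self {n : Type*} [Fintype n] :
    (𝐉 * 𝐉 : Matrix n n ℝ) = (Fintype.card n : ℝ) • 𝐉 := by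
  ext x y
  simp [mul_apply]

section Jacobsthal

variable {F : Type*} [Field F] [Fintype F] [DecidableEq F]

theorem quadraticChar_sum_sub_mul_sub (hF : ringChar F ≠ 2) (x y : F) :
    ∑ z, quadraticChar F (z - x) * quadraticChar F (z - y) =
      if x = y then (Fintype.card F : ℤ) - 1 else -1 := by
  set χ := quadraticChar F
  split_ifs with hxy
  · subst hxy
    calc ∑ z, χ (z - x) * χ (z - x) = ∑ w, χ w * χ w :=
          Fintype.sum_equiv (Equiv.subRight x) _ _ fun _ => rfl
      _ = χ 0 * χ 0 + ∑ w ∈ univ.erase (0 : F), 1 := by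
          rw [← add_sum_erase _ _ (mem_univ 0)]
          congr 1
          refine sum_congr rfl fun w hw => ?_
          rw [← sq, quadraticChar_sq_one (ne_of_mem_erase hw)]
      _ = Fintype.card F - 1 := by
          simp [χ, card_erase_of_mem, Nat.cast_sub Fintype.card_pos]
  · set a := y - x
    have ha : a ≠ 0 := sub_ne_zero.2 (Ne.symm hxy)
    calc ∑ z, χ (z - x) * χ (z - y)
        = ∑ t, χ (a * t) * χ (a * (-1) * (1 - t)) :=
          (Fintype.sum_bijective (fun t => x + a * t)
            ((Equiv.addLeft x).bijective.comp (mulLeft_bijective₀ a ha)) _ _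
            fun t => by simp only [a]; ring_nf).symm
      _ = χ (-1) * ∑ t, χ t * χ (1 - t) := by
          rw [mul_sum]
          refine sum_congr rfl fun t _ => ?_
          simp only [map_mul]
          linear_combination (χ (-1) * χ t * χ (1 - t)) * quadraticChar_sq_one ha
      _ = χ (-1) * jacobiSum χ χ⁻¹ := by
          rw [(quadraticChar_isQuadratic F).inv]
          rfl
      _ = -1 := by
          rw [jacobiSum_nontrivial_inv (quadraticChar_ne_one hF)]
          linear_combination -quadraticChar_sq_one (neg_ne_zero.2 (one_ne_zero (α := F)))

variable (F) in
def jacobsthalMatrix : Matrix F F ℝ := of fun x y => quadraticChar F (x - y)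

theorem jacobsthalMatrix_mul_allOnes (hF : ringChar F ≠ 2) : jacobsthalMatrix F * 𝐉 = 0 := by
  ext x y
  have := (Fintype.sum_equiv (Equiv.subLeft x) _ _ fun _ => rfl).trans (quadraticChar_sum_zero hF)
  simpa [jacobsthalMatrix, mul_apply] using congrArg (Int.cast : ℤ → ℝ) this

theorem allOnes_mul_jacobsthalMatrix (hF : ringChar F ≠ 2) : 𝐉 * jacobsthalMatrix F = 0 := by
  ext x y
  have := (Fintype.sum_equiv (Equiv.subRight y) _ _ fun _ => rfl).trans (quadraticChar_sum_zero hF)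
  simpa [jacobsthalMatrix, mul_apply] using congrArg (Int.cast : ℤ → ℝ) this

theorem jacobsthalMatrix_mul_self (hF : ringChar F ≠ 2) (h : IsSquare (-1 : F)) :
    jacobsthalMatrix F * jacobsthalMatrix F = (Fintype.card F : ℝ) • 1 - 𝐉 := by
  have hχ : quadraticChar F (-1) = 1 :=
    (quadraticChar_one_iff_isSquare (neg_ne_zero.2 one_ne_zero)).2 h
  ext x y
  have hsymm : ∀ z, quadraticChar F (x - z) = quadraticChar F (z - x) := fun z => by
    rw [← neg_sub, neg_eq_neg_one_mul, map_mul, hχ, one_mul]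
  have := congrArg (Int.cast : ℤ → ℝ) (quadraticChar_sum_sub_mul_sub hF x y)
  push_cast at this
  simp only [jacobsthalMatrix, mul_apply, of_apply, hsymm, this]
  split_ifs with hxy <;> simp [hxy]

theorem allOnes_add_jacobsthalMatrix_sub_mul_sq_sub (hF : ringChar F ≠ 2)
    (h : IsSquare (-1 : F)) :
    (𝐉 + jacobsthalMatrix F - (Fintype.card F : ℝ) • 1) *
      ((𝐉 + jacobsthalMatrix F) ^ 2 - (Fintype.card F : ℝ) • 1) = 0 := by
  set Q := jacobsthalMatrix F
  set q := (Fintype.card F : ℝ)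
  have hsq : (𝐉 + Q) ^ 2 - q • 1 = (q - 1) • 𝐉 := by
    rw [sq, add_mul, mul_add, mul_add, allOnes_mul_self, allOnes_mul_jacobsthalMatrix hF,
      jacobsthalMatrix_mul_allOnes hF, jacobsthalMatrix_mul_self hF h]
    module
  rw [hsq, Matrix.mul_smul, sub_mul, add_mul, allOnes_mul_self, jacobsthalMatrix_mul_allOnes hF,
    smul_mul, one_mul]
  simp [q]

end Jacobsthal

namespace SimpleGraph

variable {V : Type*} [Fintype V] [DecidableEq V] (G : SimpleGraph V)

theorem sum_adjEigenvalues : ∑ v, G.adjEigenvalues v = 0 := by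
  classical
  unfold adjEigenvalues
  exact_mod_cast (G.adjMatrix_isHermitian.trace_eq_sum_eigenvalues).symm.trans
    (G.trace_adjMatrix ℝ)

theorem eval_adjEigenvalues_eq_zero [DecidableRel G.Adj] [Nonempty V] {q : ℝ[X]}
    (hq : aeval (G.adjMatrix ℝ) q = 0) (v : V) : q.eval (G.adjEigenvalues v) = 0 := by
  obtain rfl : ‹DecidableRel G.Adj› = Classical.decRel _ := Subsingleton.elim _ _
  classical
  exact G.adjMatrix_isHermitian.eval_eigenvalues_eq_zero hq v

end SimpleGraph

section Paley

variable (p : ℕ) [Fact p.Prime] (hp : p % 4 = 1)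

theorem two_smul_adjMatrix_paleyGraph_add_one [DecidableRel (paleyGraph p hp).Adj] :
    (2 : ℝ) • (paleyGraph p hp).adjMatrix ℝ + 1 = 𝐉 + jacobsthalMatrix (ZMod p) := by
  ext x y
  by_cases hxy : x = y
  · simp [hxy, jacobsthalMatrix]
  have hne : x - y ≠ 0 := sub_ne_zero.2 hxy
  rw [Matrix.add_apply, Matrix.add_apply, jacobsthalMatrix, of_apply, of_apply]
  by_cases hsq : IsSquare (x - y)
  · have hadj : (paleyGraph p hp).Adj x y := ⟨hxy, hsq⟩
    rw [(quadraticChar_one_iff_isSquare hne).2 hsq]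
    norm_num [hxy, hadj]
  · have hadj : ¬ (paleyGraph p hp).Adj x y := fun h => hsq h.2
    rw [quadraticChar_neg_one_iff_not_isSquare.2 hsq]
    simp [hxy, hadj]

theorem paleyGraph_adjEigenvalues (i : ZMod p) :
    2 * (paleyGraph p hp).adjEigenvalues i + 1 = p ∨
      2 * (paleyGraph p hp).adjEigenvalues i + 1 = √p ∨
      2 * (paleyGraph p hp).adjEigenvalues i + 1 = -√p := by
  have hchar : ringChar (ZMod p) ≠ 2 := by
    rw [ZMod.ringChar_zmod_n]
    omega
  have hsq : IsSquare (-1 : ZMod p) := ZMod.exists_sq_eq_neg_one_iff.2 (by omega)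
  have hroot := (paleyGraph p hp).eval_adjEigenvalues_eq_zero
      (q := (C 2 * X + 1 - C (p : ℝ)) * ((C 2 * X + 1) ^ 2 - C (p : ℝ))) ?_ i
  · simp only [eval_mul, eval_sub, eval_add, eval_pow, eval_C, eval_X, eval_one, mul_eq_zero,
      sub_eq_zero] at hroot
    rcases hroot with h | h
    · exact Or.inl h
    · exact Or.inr (sq_eq_sq_iff_eq_or_eq_neg.1 (h.trans (Real.sq_sqrt (Nat.cast_nonneg p)).symm))
  · simp only [map_mul, map_sub, map_add, map_pow, aeval_C, aeval_X, map_one,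
      Algebra.algebraMap_eq_smul_one, smul_mul_assoc, one_mul]
    simpa [two_smul_adjMatrix_paleyGraph_add_one, ZMod.card] using
      allOnes_add_jacobsthalMatrix_sub_mul_sq_sub hchar hsq

theorem energy_paleyGraph_eq : (paleyGraph p hp).energy = ((p : ℝ) - 1) * (1 + √p) / 2 := by
  set μ := (paleyGraph p hp).adjEigenvalues
  have hcard : Fintype.card (ZMod p) = p := ZMod.card p
  have hsum : ∑ i, (2 * μ i + 1) = Fintype.card (ZMod p) := by
    simp [sum_add_distrib, ← mul_sum, μ, SimpleGraph.sum_adjEigenvalues]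
  have key := sum_abs_sub_one_eq_of_irrational (β := fun i => 2 * μ i + 1)
    (Fact.out : p.Prime).irrational_sqrt
    (Real.one_le_sqrt.2 (by exact_mod_cast (Fact.out : p.Prime).one_lt.le))
    (by rw [hcard]; exact paleyGraph_adjEigenvalues p hp) hsum
  rw [hcard] at key
  calc (paleyGraph p hp).energy = ∑ i, |2 * μ i + 1 - 1| / 2 := by
        simp [SimpleGraph.energy, μ, abs_mul]
    _ = ((p : ℝ) - 1) * (1 + √p) / 2 := by rw [← sum_div, key]

end Paley

theorem rpow_three_halves_lt_sub_one_mul_one_add_sqrt {x : ℝ} (hx : 3 ≤ x) :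
    x ^ ((3 : ℝ) / 2) < (x - 1) * (1 + √x) := by
  have hpow : x ^ ((3 : ℝ) / 2) = x * √x := by
    rw [show (3 : ℝ) / 2 = 1 + 1 / 2 by norm_num, Real.rpow_add (by linarith), Real.rpow_one,
      Real.sqrt_eq_rpow]
  have hsqrt : √x < x - 1 := (Real.sqrt_lt' (by linarith)).2 (by nlinarith)
  rw [hpow]
  nlinarith

theorem energy_paleyGraph_general (p : ℕ) (hp1 : p.Prime) (hp : p % 4 = 1) :
    haveI : Fact p.Prime := ⟨hp1⟩
    (paleyGraph p hp).energy = ((p : ℝ) - 1) * (1 + Real.sqrt p) / 2 ∧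
    (paleyGraph p hp).energy > (p : ℝ) ^ ((3 : ℝ) / 2) / 2 := by
  have : Fact p.Prime := ⟨hp1⟩
  have hp3 : (3 : ℝ) ≤ p := by exact_mod_cast (show 3 ≤ p by have := hp1.two_le; omega)
  rw [energy_paleyGraph_eq p hp]
  exact ⟨rfl, div_lt_div_of_pos_right (rpow_three_halves_lt_sub_one_mul_one_add_sqrt hp3) two_pos⟩

/-- For a prime `p ≥ 11` with `p ≡ 1 (mod 4)`, the energy of the Paley graph `G_p`
equals `(p-1)(1+√p)/2`; in particular `E(G_p) > p^(3/2)/2`. -/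
theorem energy_paleyGraph (p : ℕ) (hp1 : p.Prime) (hp11 : 11 ≤ p) (hp : p % 4 = 1) :
    haveI : Fact p.Prime := ⟨hp1⟩
    (paleyGraph p hp).energy = ((p : ℝ) - 1) * (1 + Real.sqrt p) / 2 ∧
    (paleyGraph p hp).energy > (p : ℝ) ^ ((3 : ℝ) / 2) / 2 :=
  energy_paleyGraph_general p hp1 hp
end

section
/- If G is a k-regular simple graph on n vertices, then E(G) ≤ k + √(k(n−1)(n−k)). -/
/-- The degree of a vertex in a simple graph (defined classically). -/
noncomputable def SimpleGraph.degree' {V : Type*} [Fintype V] (G : SimpleGraph V) (v : V) : ℕ :=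
  letI := Classical.decRel G.Adj
  G.degree v

open Finset

namespace Matrix.IsHermitian

variable {𝕜 n : Type*} [RCLike 𝕜] [Fintype n] [DecidableEq n] {A : Matrix n n 𝕜}

theorem trace_mul_self (hA : A.IsHermitian) :
    (A * A).trace = ∑ i, (hA.eigenvalues i : 𝕜) ^ 2 := by
  conv_lhs => rw [hA.spectral_theorem, ← map_mul, Unitary.conjStarAlgAut_apply, trace_mul_cycle,
    Unitary.coe_star_mul_self, one_mul, diagonal_mul_diagonal, trace_diagonal]
  simp [sq]

theorem exists_eigenvalues_eq_of_mulVec_eq (hA : A.IsHermitian) {v : n → 𝕜} (hv : v ≠ 0) {μ : ℝ}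
    (hAv : A *ᵥ v = (μ : 𝕜) • v) : ∃ i, hA.eigenvalues i = μ := by
  have hμ : Module.End.HasEigenvalue A.toLin' (μ : 𝕜) :=
    Module.End.hasEigenvalue_of_hasEigenvector ⟨by simpa using hAv, hv⟩
  have hspec := hμ.mem_spectrum
  rw [spectrum_toLin', hA.spectrum_eq_image_range] at hspec
  obtain ⟨_, ⟨i, rfl⟩, hi⟩ := hspec
  exact ⟨i, RCLike.ofReal_injective hi⟩

end Matrix.IsHermitian

theorem sum_abs_le_abs_add_sqrt {ι : Type*} [Fintype ι] [DecidableEq ι] (f : ι → ℝ) (i : ι) :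
    ∑ j, |f j| ≤ |f i| + √((Fintype.card ι - 1) * (∑ j, f j ^ 2 - f i ^ 2)) := by
  have hcard : (#(univ.erase i) : ℝ) = Fintype.card ι - 1 := by
    rw [card_erase_of_mem (mem_univ i), card_univ, Nat.cast_pred (Fintype.card_pos_iff.2 ⟨i⟩)]
  rw [← add_sum_erase _ _ (mem_univ i), ← add_sum_erase _ (fun j ↦ f j ^ 2) (mem_univ i),
    add_sub_cancel_left, ← hcard]
  gcongr
  refine Real.le_sqrt_of_sq_le ?_
  simpa only [sq_abs] using sq_sum_le_card_mul_sum_sq (s := univ.erase i) (f := fun j ↦ |f j|)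

namespace SimpleGraph

variable {V : Type*} [Fintype V] [DecidableEq V] (G : SimpleGraph V)

theorem sum_adjEigenvalues_sq : ∑ v, G.adjEigenvalues v ^ 2 = ∑ v, (G.degree' v : ℝ) := by
  let _ := Classical.decRel G.Adj
  have h := G.adjMatrix_isHermitian.trace_mul_self
  simp only [RCLike.ofReal_real_eq_id, id] at h
  rw [adjEigenvalues, ← h, Matrix.trace]
  exact sum_congr rfl fun v _ ↦ G.adjMatrix_mul_self_apply_self v

theorem exists_adjEigenvalues_eq_of_degree'_eq [Nonempty V] {k : ℕ}
    (hreg : ∀ v, G.degree' v = k) : ∃ v, G.adjEigenvalues v = k := by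
  let _ := Classical.decRel G.Adj
  refine G.adjMatrix_isHermitian.exists_eigenvalues_eq_of_mulVec_eq
    (v := Function.const V 1) (by simp) ?_
  ext v
  simp [← hreg v, degree']

end SimpleGraph

/-- If `G` is a `k`-regular simple graph on `n` vertices, then
`E(G) ≤ k + √(k(n-1)(n-k))`. -/
theorem energy_le_of_isRegular {V : Type*} [Fintype V] [DecidableEq V]
    (G : SimpleGraph V) (k : ℕ) (hreg : ∀ v, G.degree' v = k) :
    G.energy ≤ (k : ℝ) +
      Real.sqrt ((k : ℝ) * ((Fintype.card V : ℝ) - 1) * ((Fintype.card V : ℝ) - (k : ℝ))) := by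
  rcases isEmpty_or_nonempty V with _ | _
  · simp only [SimpleGraph.energy, univ_eq_empty, sum_empty]
    positivity
  set μ := G.adjEigenvalues
  obtain ⟨v, hv⟩ : ∃ v, μ v = k := G.exists_adjEigenvalues_eq_of_degree'_eq hreg
  have hsq : ∑ w, μ w ^ 2 = Fintype.card V * k := by
    simp [μ, G.sum_adjEigenvalues_sq, hreg]
  calc G.energy ≤ |μ v| + √((Fintype.card V - 1) * (∑ w, μ w ^ 2 - μ v ^ 2)) :=
        sum_abs_le_abs_add_sqrt μ v
    _ = _ := by rw [hsq, hv, Nat.abs_cast]; ring_nf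
end
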